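/- For γ > 0, λ ≥ 1, and s ∈ [0, 2], the scalar estimate λ^{-s/2} / (γ + (1+λ)^{-1}) ≤ C · γ^{-(2-s)/2} holds with a constant C depending only on s (not on γ or λ). -/
import Mathlib


open Real

theorem regularization_scalar_bound (s : ℝ) (hs : s ∈ Set.Icc (0:ℝ) 2) :
    ∃ C : ℝ, 0 < C ∧ ∀ γ lam : ℝ, 0 < γ → 1 ≤ lam →
      lam ^ (-(s / 2)) / (γ + (1 + lam)⁻¹) ≤ C * γ ^ (-((2 - s) / 2)) := by
  obtain ⟨hs0, hs2⟩ := hs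
  refine ⟨2, by norm_num, fun γ lam hγ hlam => ?_⟩
  have hlam0 : (0:ℝ) < lam := lt_of_lt_of_le one_pos hlam
  have h1lam : (0:ℝ) < 1 + lam := by linarith
  set θ : ℝ := (2 - s) / 2 with hθ
  have hθ0 : 0 ≤ θ := by rw [hθ]; linarith
  have hsum : θ + s / 2 = 1 := by rw [hθ]; ring
  have hb : (0:ℝ) < (1 + lam)⁻¹ := inv_pos.2 h1lam
  have hs20 : (0:ℝ) ≤ s / 2 := by linarith
  -- weighted AM-GM via max
  have hmean : γ ^ θ * ((1 + lam)⁻¹) ^ (s / 2) ≤ γ + (1 + lam)⁻¹ := by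
    rcases le_total γ ((1 + lam)⁻¹) with h | h
    · calc γ ^ θ * ((1 + lam)⁻¹) ^ (s / 2)
          ≤ ((1 + lam)⁻¹) ^ θ * ((1 + lam)⁻¹) ^ (s / 2) := by
            gcongr
        _ = ((1 + lam)⁻¹) ^ (θ + s / 2) := (Real.rpow_add hb _ _).symm
        _ = (1 + lam)⁻¹ := by rw [hsum, Real.rpow_one]
        _ ≤ γ + (1 + lam)⁻¹ := by linarith
    · calc γ ^ θ * ((1 + lam)⁻¹) ^ (s / 2)
          ≤ γ ^ θ * γ ^ (s / 2) := by
            gcongr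
        _ = γ ^ (θ + s / 2) := (Real.rpow_add hγ _ _).symm
        _ = γ := by rw [hsum, Real.rpow_one]
        _ ≤ γ + (1 + lam)⁻¹ := by linarith
  have hmeanpos : 0 < γ ^ θ * ((1 + lam)⁻¹) ^ (s / 2) := by positivity
  have step1 : lam ^ (-(s / 2)) / (γ + (1 + lam)⁻¹)
      ≤ lam ^ (-(s / 2)) / (γ ^ θ * ((1 + lam)⁻¹) ^ (s / 2)) := by
    gcongr
  have key : lam ^ (-(s / 2)) / (γ ^ θ * ((1 + lam)⁻¹) ^ (s / 2))
      ≤ 2 * γ ^ (-θ) := by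
    have e1 : ((1 + lam)⁻¹) ^ (s / 2) = ((1 + lam) ^ (s / 2))⁻¹ :=
      Real.inv_rpow h1lam.le _
    have e2 : lam ^ (-(s / 2)) = (lam ^ (s / 2))⁻¹ := Real.rpow_neg hlam0.le _
    have e3 : γ ^ (-θ) = (γ ^ θ)⁻¹ := Real.rpow_neg hγ.le _
    have hratio : (1 + lam) ^ (s / 2) / lam ^ (s / 2) ≤ 2 := by
      rw [← Real.div_rpow (by linarith) hlam0.le]
      calc ((1 + lam) / lam) ^ (s / 2) ≤ (2:ℝ) ^ (s / 2) := by
            apply Real.rpow_le_rpow (by positivity) _ hs20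
            rw [div_le_iff₀ hlam0]; linarith
        _ ≤ (2:ℝ) ^ (1:ℝ) := Real.rpow_le_rpow_of_exponent_le (by norm_num) (by linarith)
        _ = 2 := Real.rpow_one 2
    rw [e1, e2, e3]
    have hA : 0 < lam ^ (s / 2) := Real.rpow_pos_of_pos hlam0 _
    have hB : 0 < (1 + lam) ^ (s / 2) := Real.rpow_pos_of_pos h1lam _
    have hC : 0 < γ ^ θ := Real.rpow_pos_of_pos hγ _
    have erw : (lam ^ (s / 2))⁻¹ / (γ ^ θ * ((1 + lam) ^ (s / 2))⁻¹)
        = ((1 + lam) ^ (s / 2) / lam ^ (s / 2)) * (γ ^ θ)⁻¹ := by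
      field_simp
    rw [erw]
    gcongr
  exact le_trans step1 key
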